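/- For any string T with RLE size m, the quantity X = Σ_{w ∈ W} |K(w)| satisfies X ≤ 2(2m−3) ∈ O(m), where W is the set of bridges w that are either bridge substrings of T with RLE size 2 or 3, or bridges with |K(w)| ≥ 2. -/

import Mathlib

/-- `w` occurs in `T` iff `w` is a (contiguous) substring, i.e. infix, of `T`. -/
def IsMAW {α : Type*} [DecidableEq α] (w T : List α) : Prop :=
  w ≠ [] ∧ ¬ w <:+: T ∧ ∀ v : List α, v <:+: w → v ≠ w → v <:+: T

/-- RLE size: the number of maximal runs of equal characters. -/
def rleSize {α : Type*} [DecidableEq α] (w : List α) : ℕ :=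
  (w.destutter (· ≠ ·)).length

/-- A bridge: length ≥ 2, first two characters differ, last two characters differ. -/
def IsBridge {α : Type*} (w : List α) : Prop :=
  2 ≤ w.length ∧ w[0]? ≠ w[1]? ∧ w[w.length - 2]? ≠ w[w.length - 1]?

/-- Truncate the first run to exponent 1. -/
def truncHead {α : Type*} [DecidableEq α] : List α → List α
  | [] => []
  | a :: t => a :: t.dropWhile (· == a)

/-- Remove the first run completely. -/
def dropHeadRun {α : Type*} [DecidableEq α] : List α → List α
  | [] => []
  | a :: t => (a :: t).dropWhile (· == a)

/-- Remove the first run and truncate the new first run to exponent 1. -/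
def leftReduce {α : Type*} [DecidableEq α] (w : List α) : List α :=
  truncHead (dropHeadRun w)

/-- `bridgeReduce w = w^{(1)}`: remove the first and last runs and truncate the
new outer runs to exponent 1; the empty string if `R(w) ≤ 2`. -/
def bridgeReduce {α : Type*} [DecidableEq α] (w : List α) : List α :=
  if rleSize w ≤ 2 then [] else (leftReduce ((leftReduce w).reverse)).reverse


instance {α : Type*} [DecidableEq α] : DecidablePred (IsBridge (α := α)) := fun w => by
  unfold IsBridge; infer_instance

/-- Number of occurrences of `w` in `T`. -/
def countOcc {α : Type*} [DecidableEq α] (w T : List α) : ℕ :=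
  ((List.range (T.length + 1)).filter
    (fun i => decide ((T.drop i).take w.length = w ∧ i + w.length ≤ T.length))).length

/-- `K(w)`: the set of bridge substrings `z` of `T` with `z^{(1)} = w`, as a `Finset`. -/
def KFin {α : Type*} [DecidableEq α] (T w : List α) : Finset (List α) :=
  T.sublists.toFinset.filter (fun z => z <:+: T ∧ IsBridge z ∧ bridgeReduce z = w)

/-- `K₊(w) = { z ∈ K(w) : |K(z)| ≥ 2 }`. -/
def KplusFin {α : Type*} [DecidableEq α] (T w : List α) : Finset (List α) :=
  (KFin T w).filter (fun z => 2 ≤ (KFin T z).card)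

/-- `K^{(t)}(w)`: bridge substrings `z` of `T` with `z^{(t)} = w`. -/
def KIter {α : Type*} [DecidableEq α] (T w : List α) (t : ℕ) : Finset (List α) :=
  T.sublists.toFinset.filter (fun z => z <:+: T ∧ IsBridge z ∧ bridgeReduce^[t] z = w)

/-- `K₊^{(t)}(w) = { z ∈ K^{(t)}(w) : |K(z)| ≥ 2 }`. -/
def KplusIter {α : Type*} [DecidableEq α] (T w : List α) (t : ℕ) : Finset (List α) :=
  (KIter T w t).filter (fun z => 2 ≤ (KFin T z).card)

/-- `K(w)` as a set. -/
def KSet {α : Type*} [DecidableEq α] (T w : List α) : Set (List α) :=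
  {z | z <:+: T ∧ IsBridge z ∧ bridgeReduce z = w}

/-- Type-3 MAW: a MAW `a u b` with `R = 3`, `a ≠ u[1]`, `b ≠ u[|u|]`. -/
def IsType3MAW {α : Type*} [DecidableEq α] (w T : List α) : Prop :=
  IsMAW w T ∧ rleSize w = 3 ∧
    ∃ (a b : α) (u : List α), u ≠ [] ∧ w = a :: u ++ [b] ∧
      u.head? ≠ some a ∧ u.getLast? ≠ some b

/-- Type-4 MAW: a MAW `a u b` with `R ≥ 4`, `a ≠ u[1]`, `b ≠ u[|u|]`. -/
def IsType4MAW {α : Type*} [DecidableEq α] (w T : List α) : Prop :=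
  IsMAW w T ∧ 4 ≤ rleSize w ∧
    ∃ (a b : α) (u : List α), u ≠ [] ∧ w = a :: u ++ [b] ∧
      u.head? ≠ some a ∧ u.getLast? ≠ some b

/-- Type-5 MAW: a MAW `a u b` with `R ≥ 2` and `a = u[1]` or `b = u[|u|]`. -/
def IsType5MAW {α : Type*} [DecidableEq α] (w T : List α) : Prop :=
  IsMAW w T ∧ 2 ≤ rleSize w ∧
    ∃ (a b : α) (u : List α), u ≠ [] ∧ w = a :: u ++ [b] ∧
      (u.head? = some a ∨ u.getLast? = some b)

/-- The exponent of the longest maximal run of `a` in `T`. -/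
noncomputable def maxRunLen {α : Type*} [DecidableEq α] (a : α) (T : List α) : ℕ :=
  sSup {q : ℕ | List.replicate q a <:+: T}

/-- `w` occurs in `T` starting at position `k` (0-based). -/
def OccursAt {α : Type*} [DecidableEq α] (w T : List α) (k : ℕ) : Prop :=
  k + w.length ≤ T.length ∧ (T.drop k).take w.length = w

/-
Read `bridgeReduce` as a parent map on the set `S` of bridge substrings of `T`: the children of `w`
are `K(w)`, and the roots (parent outside `S`) are the bridges of RLE size 2 or 3. A child `v` of a
bridge `z` has the shape `c a^e z b^f d` with `c ≠ a = z.head`, `d ≠ b = z.last`, so each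
occurrence of `v` contains a canonical occurrence of `z` from which it can be recovered; hence the
occurrence counts of the children of `z` sum to at most `#z`. In any forest whose positive weights
dominate the total weight of the children, the number of children of roots and of branching nodes
is at most twice the weight of the roots. Finally, an occurrence of a root starts at a run
boundary of `T` (for RLE size 3, not at the last one), and two roots of the same RLE size cannot
start at the same position, so the roots weigh at most `(m - 1) + (m - 2)`.
-/

open List
open scoped Finset

open Finset in
/-- Summing the local inequality `c(w) + 2 ∑_{children} n + 2 [w not a root] ≤ 2 n(w) + 2 #children`
over `S` telescopes, since every non-root of `S` is a child of exactly one node. -/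
theorem sum_card_children_le {β : Type*} [DecidableEq β] (S : Finset β) (f : β → β) (n : β → ℕ)
    (hn : ∀ w ∈ S, 1 ≤ n w) (hf : ∀ w ∈ S, ∑ v ∈ S with f v = w, n v ≤ n w) :
    ∑ w ∈ S with f w ∉ S ∨ 2 ≤ #{v ∈ S | f v = w}, #{v ∈ S | f v = w} ≤
      2 * ∑ w ∈ S with f w ∉ S, n w := by
  have step : ∀ w ∈ S,
      (if f w ∉ S ∨ 2 ≤ #{v ∈ S | f v = w} then #{v ∈ S | f v = w} else 0) +
        2 * ∑ v ∈ S with f v = w, n v + (if f w ∈ S then 2 else 0) ≤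
      2 * n w + 2 * #{v ∈ S | f v = w} := by
    intro w hw
    have hfw := hf w hw
    have hnw := hn w hw
    obtain h0 | h0 := Nat.eq_zero_or_pos #{v ∈ S | f v = w}
    · rw [card_eq_zero.mp h0, sum_empty]
      split_ifs <;> omega
    · by_cases hr : f w ∈ S <;> simp only [hr, not_true, not_false_eq_true, false_or, true_or,
        if_true, if_false] <;> try split_ifs
      all_goals omega
  have total := sum_le_sum step
  simp only [sum_add_distrib, ← mul_sum, sum_fiberwise_eq_sum_filter,
    sum_card_fiberwise_eq_card_filter] at total
  simp only [← sum_filter, sum_const, smul_eq_mul] at total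
  rw [← sum_filter_add_sum_filter_not S (fun w => f w ∈ S) n] at total
  omega

lemma Finset.card_filter_exists_lt_le {β : Type*} [LinearOrder β] (s : Finset β) :
    #{j ∈ s | ∃ j' ∈ s, j < j'} ≤ #s - 1 := by
  rcases s.eq_empty_or_nonempty with rfl | hs
  · simp
  refine (Finset.card_le_card fun j hj => ?_).trans (Finset.card_erase_of_mem (s.max'_mem hs)).le
  obtain ⟨hj, j', hj', hlt⟩ := Finset.mem_filter.1 hj
  exact Finset.mem_erase.2 ⟨(hlt.trans_le (s.le_max' j' hj')).ne, hj⟩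

section ListLemmas

variable {α : Type*}

lemma List.IsPrefix.getElem?_eq {u w : List α} (h : u <+: w) {i : ℕ} (hi : i < u.length) :
    u[i]? = w[i]? := by
  rw [getElem?_eq_getElem hi, prefix_iff_getElem?.1 h i hi]

lemma replicate_append_cons (k : ℕ) (a : α) (t : List α) :
    replicate k a ++ a :: t = a :: (replicate k a ++ t) := by
  rw [← singleton_append, ← append_assoc, ← replicate_succ', replicate_succ, cons_append]

lemma replicate_append_cons_inj {a c d : α} {m n : ℕ} {l l' : List α} (hc : c ≠ a)
    (hd : d ≠ a) (h : replicate m a ++ c :: l = replicate n a ++ d :: l') :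
    m = n ∧ c = d ∧ l = l' := by
  induction m generalizing n with
  | zero =>
    cases n with
    | zero => simpa using h
    | succ n => exact absurd (cons.inj h).1 hc
  | succ m ih =>
    cases n with
    | zero => exact absurd (cons.inj h).1.symm hd
    | succ n => simpa using ih (cons.inj h).2

lemma isBridge_iff {w : List α} :
    IsBridge w ↔ 2 ≤ w.length ∧ w[0]? ≠ w[1]? ∧ w.reverse[0]? ≠ w.reverse[1]? := by
  unfold IsBridge
  refine and_congr_right fun hw => and_congr_right fun _ => ?_
  rw [getElem?_reverse (by omega), getElem?_reverse (by omega), ne_comm]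
  simp only [Nat.sub_zero, Nat.sub_sub]

lemma getElem?_cons_zero_ne_one {a : α} {r : List α} :
    (a :: r)[0]? ≠ (a :: r)[1]? ↔ r.head? ≠ some a := by
  simp [head?_eq_getElem?, eq_comm]

end ListLemmas

section RunLength

variable {α : Type*} [DecidableEq α]

@[simp] lemma rleSize_nil : rleSize ([] : List α) = 0 := rfl

lemma rleSize_cons_cons (a b : α) (t : List α) :
    rleSize (a :: b :: t) = rleSize (b :: t) + if a = b then 0 else 1 := by
  unfold rleSize
  rw [destutter_cons_cons, destutter_cons']
  split_ifs <;> simp_all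

lemma rleSize_eq_zero_iff {w : List α} : rleSize w = 0 ↔ w = [] := by
  rw [rleSize, List.length_eq_zero_iff, destutter_eq_nil]

lemma rleSize_le_length (w : List α) : rleSize w ≤ w.length :=
  (destutter_sublist _ _).length_le

lemma rleSize_cons_of_head?_ne {a : α} {t : List α} (h : t.head? ≠ some a) :
    rleSize (a :: t) = rleSize t + 1 := by
  cases t with
  | nil => rfl
  | cons b t =>
    rw [rleSize_cons_cons, if_neg (by simpa [eq_comm] using h)]

lemma rleSize_replicate_append (k : ℕ) (a : α) (t : List α) :
    rleSize (replicate (k + 1) a ++ t) = rleSize (a :: t) := by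
  induction k with
  | zero => rfl
  | succ k ih =>
    rw [replicate_succ, cons_append, ← ih, replicate_succ, cons_append, rleSize_cons_cons,
      if_pos rfl, add_zero]

def boundaries (w : List α) : Finset ℕ :=
  {j ∈ Finset.range (w.length - 1) | w[j]? ≠ w[j + 1]?}

lemma mem_boundaries {w : List α} {j : ℕ} :
    j ∈ boundaries w ↔ j + 1 < w.length ∧ w[j]? ≠ w[j + 1]? := by
  simp only [boundaries, Finset.mem_filter, Finset.mem_range, Nat.lt_sub_iff_add_lt]

lemma card_boundaries : ∀ w : List α, #(boundaries w) = rleSize w - 1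
  | [] => rfl
  | [_] => rfl
  | a :: b :: t => by
    rw [boundaries, Finset.card_filter, length_cons, length_cons, Nat.add_sub_cancel,
      Finset.sum_range_succ', rleSize_cons_cons]
    have ih := card_boundaries (b :: t)
    rw [boundaries, Finset.card_filter] at ih
    simp only [getElem?_cons_succ, getElem?_cons_zero, length_cons, Nat.add_sub_cancel] at ih ⊢
    have hpos : rleSize (b :: t) ≠ 0 := by simp [rleSize_eq_zero_iff]
    rw [ih]
    by_cases hab : a = b
    · simp [hab]
    · simp [hab]
      omega

lemma card_boundaries_reverse (w : List α) : #(boundaries w.reverse) = #(boundaries w) := by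
  have key : ∀ {u : List α} {j : ℕ}, j ∈ boundaries u →
      u.length - 2 - j ∈ boundaries u.reverse := by
    intro u j hj
    rw [mem_boundaries] at hj ⊢
    rw [length_reverse, getElem?_reverse (by omega), getElem?_reverse (by omega)]
    refine ⟨by omega, ?_⟩
    rw [show u.length - 1 - (u.length - 2 - j) = j + 1 by omega,
      show u.length - 1 - (u.length - 2 - j + 1) = j by omega]
    exact hj.2.symm
  refine Finset.card_nbij' (fun j => w.length - 2 - j) (fun j => w.length - 2 - j) ?_ ?_ ?_ ?_
  · intro j hj
    simpa using key (u := w.reverse) hj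
  · exact fun j hj => key hj
  · intro j hj
    have := (mem_boundaries.mp hj).1
    rw [length_reverse] at this
    dsimp only
    omega
  · intro j hj
    have := (mem_boundaries.mp hj).1
    dsimp only
    omega

lemma rleSize_reverse (w : List α) : rleSize w.reverse = rleSize w := by
  rcases eq_or_ne w [] with rfl | hw
  · rfl
  have h1 := card_boundaries w
  have h2 := card_boundaries w.reverse
  have h3 : rleSize w ≠ 0 := by rwa [Ne, rleSize_eq_zero_iff]
  have h4 : rleSize w.reverse ≠ 0 := by rwa [Ne, rleSize_eq_zero_iff, reverse_eq_nil_iff]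
  rw [card_boundaries_reverse] at h2
  omega

end RunLength

section LeftReduce

variable {α : Type*} [DecidableEq α]

lemma dropHeadRun_cons (a : α) (t : List α) : dropHeadRun (a :: t) = t.dropWhile (· == a) := by
  simp [dropHeadRun]

lemma truncHead_cons (a : α) (t : List α) : truncHead (a :: t) = a :: t.dropWhile (· == a) :=
  rfl

lemma head?_dropWhile_beq_ne (a : α) (t : List α) : (t.dropWhile (· == a)).head? ≠ some a := by
  intro h
  simpa [h] using head?_dropWhile_not (· == a) t

lemma dropWhile_beq_eq_self {a : α} {t : List α} (h : t.head? ≠ some a) :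
    t.dropWhile (· == a) = t := by
  cases t with
  | nil => rfl
  | cons b t => simp_all

lemma eq_replicate_append_dropWhile_beq (a : α) (t : List α) :
    ∃ k, t = replicate k a ++ t.dropWhile (· == a) := by
  refine ⟨(t.takeWhile (· == a)).length, ?_⟩
  conv_lhs => rw [← takeWhile_append_dropWhile (p := (· == a)) (l := t)]
  congr 1
  exact eq_replicate_iff.2 ⟨rfl, fun b hb => by simpa using mem_takeWhile_imp hb⟩

lemma rleSize_dropWhile_beq (a : α) (t : List α) :
    rleSize (t.dropWhile (· == a)) + 1 = rleSize (a :: t) := by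
  obtain ⟨k, hk⟩ := eq_replicate_append_dropWhile_beq a t
  conv_rhs => rw [hk, ← cons_append, ← replicate_succ, rleSize_replicate_append]
  exact (rleSize_cons_of_head?_ne (head?_dropWhile_beq_ne a t)).symm

lemma rleSize_truncHead (w : List α) : rleSize (truncHead w) = rleSize w := by
  cases w with
  | nil => rfl
  | cons a t =>
    rw [truncHead_cons, rleSize_cons_of_head?_ne (head?_dropWhile_beq_ne a t),
      rleSize_dropWhile_beq]

lemma rleSize_leftReduce (w : List α) : rleSize (leftReduce w) = rleSize w - 1 := by
  cases w with
  | nil => rfl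
  | cons a t =>
    rw [leftReduce, rleSize_truncHead, dropHeadRun_cons, ← rleSize_dropWhile_beq a t,
      Nat.add_sub_cancel]

lemma rleSize_bridgeReduce (w : List α) : rleSize (bridgeReduce w) = rleSize w - 2 := by
  unfold bridgeReduce
  split_ifs
  · rw [rleSize_nil]
    omega
  · rw [rleSize_reverse, rleSize_leftReduce, rleSize_reverse, rleSize_leftReduce]
    omega

lemma truncHead_suffix (w : List α) : truncHead w <:+ w := by
  cases w with
  | nil => exact suffix_refl _
  | cons a t =>
    obtain ⟨k, hk⟩ := eq_replicate_append_dropWhile_beq a t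
    refine ⟨replicate k a, ?_⟩
    conv_rhs => rw [hk]
    rw [truncHead_cons, replicate_append_cons]

lemma leftReduce_suffix (w : List α) : leftReduce w <:+ w := by
  refine (truncHead_suffix _).trans ?_
  cases w with
  | nil => exact suffix_refl _
  | cons a t => exact dropWhile_suffix _

lemma bridgeReduce_prefix_leftReduce (w : List α) : bridgeReduce w <+: leftReduce w := by
  unfold bridgeReduce
  split_ifs
  · exact nil_prefix
  · simpa using reverse_prefix.2 (leftReduce_suffix (leftReduce w).reverse)

lemma bridgeReduce_infix (w : List α) : bridgeReduce w <:+: w :=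
  (bridgeReduce_prefix_leftReduce w).isInfix.trans (leftReduce_suffix w).isInfix

lemma head?_ne_of_leftReduce_eq_cons {w r : List α} {a : α} (h : leftReduce w = a :: r) :
    r.head? ≠ some a := by
  rw [leftReduce] at h
  cases hw : dropHeadRun w with
  | nil => simp [hw, truncHead] at h
  | cons b t =>
    rw [hw, truncHead_cons, cons.injEq] at h
    obtain ⟨rfl, rfl⟩ := h
    exact head?_dropWhile_beq_ne _ _

lemma leftReduce_cons_of_head?_ne {c : α} {t : List α} (hc : t.head? ≠ some c) (ht : t ≠ []) :
    ∃ a e r, t = replicate e a ++ a :: r ∧ leftReduce (c :: t) = a :: r := by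
  obtain ⟨a, t₀, rfl⟩ := exists_cons_of_ne_nil ht
  obtain ⟨k, hk⟩ := eq_replicate_append_dropWhile_beq a t₀
  refine ⟨a, k, t₀.dropWhile (· == a), ?_, ?_⟩
  · rw [replicate_append_cons, ← hk]
  · rw [leftReduce, dropHeadRun_cons, dropWhile_beq_eq_self hc, truncHead_cons]

end LeftReduce

section Bridge

variable {α : Type*} [DecidableEq α]

lemma two_le_rleSize {w : List α} (hw : IsBridge w) : 2 ≤ rleSize w := by
  obtain ⟨hlen, h01, -⟩ := hw
  obtain ⟨a, t, rfl⟩ := exists_cons_of_ne_nil (ne_nil_of_length_pos (by omega) : w ≠ [])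
  have ht : t ≠ [] := ne_nil_of_length_pos (by simp at hlen; omega)
  rw [rleSize_cons_of_head?_ne (getElem?_cons_zero_ne_one.1 h01)]
  have := mt rleSize_eq_zero_iff.1 ht
  omega

lemma bridgeReduce_eq_of_ne_nil {w : List α} (h : bridgeReduce w ≠ []) :
    bridgeReduce w = (leftReduce (leftReduce w).reverse).reverse := by
  unfold bridgeReduce at h ⊢
  split_ifs at h ⊢
  · exact absurd rfl h
  · rfl

lemma isBridge_bridgeReduce {w : List α} (h : 2 ≤ (bridgeReduce w).length) :
    IsBridge (bridgeReduce w) := by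
  have hz := bridgeReduce_eq_of_ne_nil (ne_nil_of_length_pos (by omega) : bridgeReduce w ≠ [])
  have hzx := bridgeReduce_prefix_leftReduce w
  set z := bridgeReduce w
  set x := leftReduce w
  obtain ⟨a, r, hx⟩ := exists_cons_of_ne_nil (ne_nil_of_length_pos (by
    have := hzx.length_le; omega) : x ≠ [])
  obtain ⟨b, r', hz'⟩ := exists_cons_of_ne_nil (ne_nil_of_length_pos (by
    rw [length_reverse]; omega) : z.reverse ≠ [])
  refine isBridge_iff.2 ⟨h, ?_, ?_⟩
  · rw [hzx.getElem?_eq (by omega), hzx.getElem?_eq (by omega), hx, getElem?_cons_zero_ne_one]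
    exact head?_ne_of_leftReduce_eq_cons hx
  · rw [hz', getElem?_cons_zero_ne_one]
    exact head?_ne_of_leftReduce_eq_cons (by rw [← hz', hz, reverse_reverse])

lemma isBridge_bridgeReduce_iff {w : List α} : IsBridge (bridgeReduce w) ↔ 4 ≤ rleSize w := by
  have hrle := rleSize_bridgeReduce w
  refine ⟨fun h => ?_, fun h => isBridge_bridgeReduce ?_⟩
  · have := two_le_rleSize h
    omega
  · have := rleSize_le_length (bridgeReduce w)
    omega

lemma IsBridge.eq_frame_of_bridgeReduce_eq {v z : List α} {a b : α} (hv : IsBridge v)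
    (hz : 2 ≤ z.length) (h : bridgeReduce v = z) (ha : z.head? = some a)
    (hb : z.getLast? = some b) :
    ∃ c d e f, c ≠ a ∧ d ≠ b ∧ v = c :: (replicate e a ++ z ++ replicate f b ++ [d]) := by
  obtain ⟨hvlen, hv01, -⟩ := isBridge_iff.1 hv
  obtain ⟨c, t, rfl⟩ := exists_cons_of_ne_nil (ne_nil_of_length_pos (by omega) : v ≠ [])
  have hct := getElem?_cons_zero_ne_one.1 hv01
  obtain ⟨a', e, r, ht, hx⟩ :=
    leftReduce_cons_of_head?_ne hct (ne_nil_of_length_pos (by simp at hvlen; omega))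
  have hz' := bridgeReduce_eq_of_ne_nil (w := c :: t)
    (by rw [h]; exact ne_nil_of_length_pos (by omega))
  have hzx := bridgeReduce_prefix_leftReduce (c :: t)
  rw [h, hx] at hz' hzx
  set x := a' :: r
  have hxlen : 2 ≤ x.length := le_trans hz hzx.length_le
  have hxv : x.reverse <+: (c :: t).reverse :=
    reverse_prefix.2 ⟨c :: replicate e a', by rw [ht]; simp⟩
  have hdt : x.reverse[0]? ≠ x.reverse[1]? := by
    rw [hxv.getElem?_eq (by simp; omega), hxv.getElem?_eq (by simp; omega)]
    exact (isBridge_iff.1 hv).2.2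
  obtain ⟨d, t', hxr⟩ :=
    exists_cons_of_ne_nil (ne_nil_of_length_pos (by simp; omega) : x.reverse ≠ [])
  rw [hxr, getElem?_cons_zero_ne_one] at hdt
  have ht'len : t'.length + 1 = x.length := by rw [← length_cons, ← hxr, length_reverse]
  obtain ⟨b', f, r', ht', hx'⟩ :=
    leftReduce_cons_of_head?_ne hdt (ne_nil_of_length_pos (by omega) : t' ≠ [])
  rw [hxr, hx'] at hz'
  have hbb : b' = b := by
    rw [hz', getLast?_reverse] at hb
    simpa using hb
  have haa : a' = a := by
    rw [head?_eq_getElem?, hzx.getElem?_eq (by omega)] at ha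
    simpa [x] using ha
  subst hbb haa
  refine ⟨c, d, e, f, ?_, ?_, ?_⟩
  · rintro rfl
    apply hct
    rw [ht]
    cases e <;> rfl
  · rintro rfl
    apply hdt
    rw [ht']
    cases f <;> rfl
  · rw [ht, ← reverse_reverse x, hxr, ht', hz']
    simp

end Bridge

section Occurrences

variable {α : Type*} [DecidableEq α]

def bridgeSubstrings (T : List α) : Finset (List α) :=
  {z ∈ T.sublists.toFinset | z <:+: T ∧ IsBridge z}

lemma mem_bridgeSubstrings {T z : List α} : z ∈ bridgeSubstrings T ↔ z <:+: T ∧ IsBridge z := by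
  simp only [bridgeSubstrings, Finset.mem_filter, mem_toFinset, mem_sublists, and_iff_right_iff_imp]
  exact fun h => h.1.sublist

lemma mem_KFin {T w v : List α} : v ∈ KFin T w ↔ v <:+: T ∧ IsBridge v ∧ bridgeReduce v = w := by
  simp only [KFin, Finset.mem_filter, mem_toFinset, mem_sublists, and_iff_right_iff_imp]
  exact fun h => h.1.sublist

lemma KFin_eq_filter (T w : List α) :
    KFin T w = {v ∈ bridgeSubstrings T | bridgeReduce v = w} := by
  ext v
  rw [mem_KFin, Finset.mem_filter, mem_bridgeSubstrings, and_assoc]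

def occurrences (z T : List α) : Finset (List α × List α) :=
  {ps ∈ T.inits.toFinset ×ˢ T.tails.toFinset | ps.1 ++ z ++ ps.2 = T}

lemma mem_occurrences {z T : List α} {ps : List α × List α} :
    ps ∈ occurrences z T ↔ ps.1 ++ z ++ ps.2 = T := by
  simp only [occurrences, Finset.mem_filter, Finset.mem_product, mem_toFinset, mem_inits,
    mem_tails, and_iff_right_iff_imp]
  intro h
  exact ⟨⟨z ++ ps.2, by rw [← h, append_assoc]⟩, ⟨ps.1 ++ z, h⟩⟩

lemma card_occurrences_pos {z T : List α} (h : z <:+: T) : 0 < #(occurrences z T) := by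
  obtain ⟨p, s, hT⟩ := h
  exact Finset.card_pos.2 ⟨(p, s), mem_occurrences.2 hT⟩

theorem sum_card_occurrences_KFin_le {T z : List α} (hz : IsBridge z) :
    ∑ v ∈ KFin T z, #(occurrences v T) ≤ #(occurrences z T) := by
  have hz0 : z ≠ [] := ne_nil_of_length_pos (by have := hz.1; omega)
  obtain ⟨a, ha⟩ := Option.ne_none_iff_exists'.1 (mt head?_eq_none_iff.1 hz0)
  obtain ⟨b, hb⟩ := Option.ne_none_iff_exists'.1 (mt getLast?_eq_none_iff.1 hz0)
  rw [← Finset.card_sigma]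
  refine Finset.card_le_card_of_forall_subsingleton
    (fun x y => ∃ c d e f, c ≠ a ∧ d ≠ b ∧
      x.1 = c :: (replicate e a ++ z ++ replicate f b ++ [d]) ∧
      y = (x.2.1 ++ c :: replicate e a, replicate f b ++ d :: x.2.2)) ?_ ?_
  · rintro ⟨v, p, s⟩ hx
    rw [Finset.mem_sigma, mem_KFin, mem_occurrences] at hx
    obtain ⟨⟨-, hv, hred⟩, hT⟩ := hx
    obtain ⟨c, d, e, f, hca, hdb, rfl⟩ := hv.eq_frame_of_bridgeReduce_eq hz.1 hred ha hb
    refine ⟨_, mem_occurrences.2 ?_, c, d, e, f, hca, hdb, rfl, rfl⟩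
    rw [← hT]
    simp
  · rintro y - ⟨v₁, p₁, s₁⟩ ⟨-, c₁, d₁, e₁, f₁, hc₁, hd₁, hv₁, hy₁⟩
      ⟨v₂, p₂, s₂⟩ ⟨-, c₂, d₂, e₂, f₂, hc₂, hd₂, hv₂, hy₂⟩
    dsimp only at hv₁ hv₂ hy₁ hy₂
    rw [hy₁, Prod.mk.injEq] at hy₂
    obtain ⟨hl, hr⟩ := hy₂
    obtain ⟨rfl, rfl, rfl⟩ := replicate_append_cons_inj hd₁ hd₂ hr
    have hl' := congrArg reverse hl
    simp only [reverse_append, reverse_cons, reverse_replicate, append_assoc,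
      singleton_append] at hl'
    obtain ⟨rfl, rfl, hp⟩ := replicate_append_cons_inj hc₁ hc₂ hl'
    rw [reverse_inj] at hp
    subst hp hv₁ hv₂
    rfl

end Occurrences

section Roots

variable {α : Type*} [DecidableEq α]

lemma add_mem_boundaries {p z s T : List α} (h : p ++ z ++ s = T) {j : ℕ}
    (hj : j ∈ boundaries z) : p.length + j ∈ boundaries T := by
  rw [mem_boundaries] at hj ⊢
  subst h
  have hget : ∀ i < z.length, (p ++ z ++ s)[p.length + i]? = z[i]? := fun i hi => by
    rw [append_assoc, getElem?_append_right (by omega), Nat.add_sub_cancel_left,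
      getElem?_append_left hi]
  refine ⟨by simp only [length_append]; omega, ?_⟩
  rw [Nat.add_assoc, hget j (by omega), hget (j + 1) hj.1]
  exact hj.2

lemma IsBridge.zero_mem_boundaries {z : List α} (hz : IsBridge z) : 0 ∈ boundaries z :=
  mem_boundaries.2 ⟨by have := hz.1; omega, hz.2.1⟩

lemma rleSize_lt_of_prefix {u w : List α} (h : u <+: w) (hne : u ≠ w) (hw : IsBridge w) :
    rleSize u < rleSize w := by
  have hlt : u.length < w.length := lt_of_le_of_ne h.length_le (mt h.eq_of_length hne)
  rcases eq_or_ne u [] with rfl | hu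
  · have := two_le_rleSize hw
    rw [rleSize_nil]
    omega
  have hsub : boundaries u ⊆ boundaries w := fun j hj => by
    rw [mem_boundaries] at hj ⊢
    rw [← h.getElem?_eq (by omega), ← h.getElem?_eq hj.1]
    exact ⟨by omega, hj.2⟩
  have hlast : w.length - 2 ∈ boundaries w := by
    have := hw.1
    refine mem_boundaries.2 ⟨by omega, ?_⟩
    rw [show w.length - 2 + 1 = w.length - 1 by omega]
    exact hw.2.2
  have hcard := Finset.card_lt_card ((Finset.ssubset_iff_of_subset hsub).2
    ⟨_, hlast, fun hm => by have := (mem_boundaries.1 hm).1; omega⟩)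
  rw [card_boundaries, card_boundaries] at hcard
  have := mt rleSize_eq_zero_iff.1 hu
  omega

lemma eq_of_append_eq_of_rleSize_eq {ρ₁ ρ₂ s₁ s₂ : List α} (h₁ : IsBridge ρ₁) (h₂ : IsBridge ρ₂)
    (hr : rleSize ρ₁ = rleSize ρ₂) (h : ρ₁ ++ s₁ = ρ₂ ++ s₂) : ρ₁ = ρ₂ := by
  by_contra hne
  rcases prefix_or_prefix_of_prefix (prefix_append ρ₁ s₁) (h ▸ prefix_append ρ₂ s₂) with hp | hp
  · exact (rleSize_lt_of_prefix hp hne h₂).ne hr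
  · exact (rleSize_lt_of_prefix hp (Ne.symm hne) h₁).ne hr.symm

lemma sum_card_occurrences_le_card {T : List α} {R : Finset (List α)} {r : ℕ} (U : Finset ℕ)
    (hR : ∀ ρ ∈ R, IsBridge ρ ∧ rleSize ρ = r)
    (hU : ∀ ρ ∈ R, ∀ ps ∈ occurrences ρ T, ps.1.length ∈ U) :
    ∑ ρ ∈ R, #(occurrences ρ T) ≤ #U := by
  rw [← Finset.card_sigma]
  refine Finset.card_le_card_of_injOn (fun x => x.2.1.length) (fun x hx => ?_) ?_
  · rw [Finset.mem_coe, Finset.mem_sigma] at hx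
    exact hU _ hx.1 _ hx.2
  · rintro ⟨ρ₁, p₁, s₁⟩ hx₁ ⟨ρ₂, p₂, s₂⟩ hx₂ hp
    simp only [Finset.coe_sigma, Set.mem_sigma_iff, Finset.mem_coe, mem_occurrences] at hx₁ hx₂
    rw [append_assoc] at hx₁ hx₂
    obtain ⟨rfl, h⟩ := append_inj (hx₁.2.trans hx₂.2.symm) hp
    obtain ⟨hb₁, hr₁⟩ := hR _ hx₁.1
    obtain ⟨hb₂, hr₂⟩ := hR _ hx₂.1
    obtain rfl := eq_of_append_eq_of_rleSize_eq hb₁ hb₂ (hr₁.trans hr₂.symm) h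
    rw [append_cancel_left h]

lemma bridgeReduce_notMem_bridgeSubstrings_iff {T w : List α} (hw : w ∈ bridgeSubstrings T) :
    bridgeReduce w ∉ bridgeSubstrings T ↔ rleSize w = 2 ∨ rleSize w = 3 := by
  obtain ⟨hwT, hb⟩ := mem_bridgeSubstrings.1 hw
  rw [mem_bridgeSubstrings, isBridge_bridgeReduce_iff,
    and_iff_right ((bridgeReduce_infix w).trans hwT)]
  have := two_le_rleSize hb
  omega

theorem sum_card_occurrences_roots_le (T : List α) :
    ∑ w ∈ bridgeSubstrings T with bridgeReduce w ∉ bridgeSubstrings T, #(occurrences w T) ≤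
      (rleSize T - 1) + (rleSize T - 2) := by
  set R := {w ∈ bridgeSubstrings T | bridgeReduce w ∉ bridgeSubstrings T}
  have hR : ∀ w ∈ R, IsBridge w ∧ (rleSize w = 2 ∨ rleSize w = 3) := fun w hw => by
    obtain ⟨hwS, hroot⟩ := Finset.mem_filter.1 hw
    exact ⟨(mem_bridgeSubstrings.1 hwS).2, (bridgeReduce_notMem_bridgeSubstrings_iff hwS).1 hroot⟩
  have h2 : ∑ w ∈ R with rleSize w = 2, #(occurrences w T) ≤ #(boundaries T) :=
    sum_card_occurrences_le_card (r := 2) _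
      (fun w hw => ⟨(hR w (Finset.mem_filter.1 hw).1).1, (Finset.mem_filter.1 hw).2⟩)
      fun w hw ps hps => by
        simpa using add_mem_boundaries (mem_occurrences.1 hps)
          (hR w (Finset.mem_filter.1 hw).1).1.zero_mem_boundaries
  have h3 : ∑ w ∈ R with ¬rleSize w = 2, #(occurrences w T) ≤
      #{j ∈ boundaries T | ∃ j' ∈ boundaries T, j < j'} := by
    refine sum_card_occurrences_le_card (r := 3) _ (fun w hw => ?_) fun w hw ps hps => ?_
    · obtain ⟨hwR, hw2⟩ := Finset.mem_filter.1 hw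
      obtain ⟨hb, hr⟩ := hR w hwR
      exact ⟨hb, by omega⟩
    · obtain ⟨hwR, hw2⟩ := Finset.mem_filter.1 hw
      obtain ⟨hb, hr⟩ := hR w hwR
      have hocc := mem_occurrences.1 hps
      obtain ⟨j, hj, hj0⟩ := Finset.exists_mem_ne (s := boundaries w)
        (by rw [card_boundaries]; omega) 0
      refine Finset.mem_filter.2 ⟨by simpa using add_mem_boundaries hocc hb.zero_mem_boundaries,
        _, add_mem_boundaries hocc hj, by omega⟩
  have hcard := Finset.card_filter_exists_lt_le (boundaries T)
  rw [← Finset.sum_filter_add_sum_filter_not R (fun w => rleSize w = 2)]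
  rw [card_boundaries] at h2 hcard
  omega

end Roots

section Main

variable {α : Type*} [DecidableEq α]

lemma infix_of_mem_KFin {T w v : List α} (hv : v ∈ KFin T w) : w <:+: T := by
  obtain ⟨hvT, -, rfl⟩ := mem_KFin.1 hv
  exact (bridgeReduce_infix v).trans hvT

lemma filter_sublists_eq_filter_bridgeSubstrings (T : List α) :
    T.sublists.toFinset.filter (fun w => IsBridge w ∧
        ((w <:+: T ∧ (rleSize w = 2 ∨ rleSize w = 3)) ∨ 2 ≤ #(KFin T w))) =
      {w ∈ bridgeSubstrings T | bridgeReduce w ∉ bridgeSubstrings T ∨ 2 ≤ #(KFin T w)} := by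
  ext w
  simp only [Finset.mem_filter, mem_toFinset, mem_sublists]
  constructor
  · rintro ⟨-, hb, h⟩
    have hwT : w <:+: T := h.elim (·.1) fun h2 =>
      have ⟨_, hv⟩ := Finset.card_pos.1 (by omega : 0 < #(KFin T w))
      infix_of_mem_KFin hv
    have hwS := mem_bridgeSubstrings.2 ⟨hwT, hb⟩
    exact ⟨hwS, h.imp (fun h23 => (bridgeReduce_notMem_bridgeSubstrings_iff hwS).2 h23.2) id⟩
  · rintro ⟨hwS, h⟩
    obtain ⟨hwT, hb⟩ := mem_bridgeSubstrings.1 hwS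
    exact ⟨hwT.sublist, hb,
      h.imp (fun hr => ⟨hwT, (bridgeReduce_notMem_bridgeSubstrings_iff hwS).1 hr⟩) id⟩

end Main

theorem stmt8 {α : Type*} [DecidableEq α] (T : List α) :
    ∑ w ∈ T.sublists.toFinset.filter (fun w => IsBridge w ∧
        ((w <:+: T ∧ (rleSize w = 2 ∨ rleSize w = 3)) ∨ 2 ≤ (KFin T w).card)),
      (KFin T w).card ≤ 2 * (2 * rleSize T - 3) := by
  set S := bridgeSubstrings T
  rw [filter_sublists_eq_filter_bridgeSubstrings]
  simp only [KFin_eq_filter]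
  calc _ ≤ 2 * ∑ w ∈ S with bridgeReduce w ∉ S, #(occurrences w T) :=
        sum_card_children_le S bridgeReduce _
          (fun w hw => card_occurrences_pos (mem_bridgeSubstrings.1 hw).1)
          fun w hw => by
            rw [← KFin_eq_filter]
            exact sum_card_occurrences_KFin_le (mem_bridgeSubstrings.1 hw).2
    _ ≤ 2 * ((rleSize T - 1) + (rleSize T - 2)) :=
        Nat.mul_le_mul_left 2 (sum_card_occurrences_roots_le T)
    _ ≤ 2 * (2 * rleSize T - 3) := by omega
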